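/- arXiv:2502.12738 — 2 statements merged into one kernel-verified Lean document; each statement's English description precedes it below -/
import Mathlib

section
/- If t̄ ∈ relbd(C), then for every λ > 0 the norm-penalized KLIEP loss ℓ_λ(Δ) = ℓ(Δ) + λ·N(Δ) attains a global minimum, i.e., there exists Δ₀ ∈ ℝ^k with ℓ_λ(Δ₀) ≤ ℓ_λ(Δ) for all Δ ∈ ℝ^k. (Theorem 2(ii), λ > 0 case.) -/
/-! The hypothesis gives `t̄ ∈ conv{t_j}`, so for every `Δ` some `t_j` has `⟪Δ, t̄⟫ ≤ ⟪Δ, t_j⟫`,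
whence `ℓ ≥ -log n`. On a finite-dimensional space a positive-definite seminorm is continuous and
dominates a positive multiple of the Euclidean norm, so `ℓ + λN` is continuous and tends to `+∞`
along the cocompact filter; such a function attains its minimum. -/

open scoped RealInnerProductSpace

/-- The empirical KLIEP loss
`ℓ(Δ) = -⟪Δ, t̄⟫ + log((1/n) ∑_j exp ⟪Δ, t_j⟫)`. -/
noncomputable def kliepLoss {k n : ℕ} (tbar : EuclideanSpace ℝ (Fin k))
    (t : Fin n → EuclideanSpace ℝ (Fin k)) (Δ : EuclideanSpace ℝ (Fin k)) : ℝ :=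
  -⟪Δ, tbar⟫ + Real.log ((1 / (n : ℝ)) * ∑ j, Real.exp ⟪Δ, t j⟫)

open Filter

namespace Seminorm

variable {E : Type*} [NormedAddCommGroup E] [NormedSpace ℝ E] [FiniteDimensional ℝ E]

theorem continuous_of_finiteDimensional (p : Seminorm ℝ E) : Continuous p :=
  continuousOn_univ.mp (p.convexOn.continuousOn isOpen_univ)

theorem exists_pos_mul_norm_le (p : Seminorm ℝ E) (hp : ∀ x, p x = 0 → x = 0) :
    ∃ c > 0, ∀ x, c * ‖x‖ ≤ p x := by
  have hpos : ∀ u ∈ Metric.sphere (0 : E) 1, 0 < p u := fun u hu =>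
    (apply_nonneg p u).lt_of_ne' fun h => by simp [hp u h] at hu
  obtain ⟨c, hc, hcp⟩ := (isCompact_sphere (0 : E) 1).exists_forall_le'
    p.continuous_of_finiteDimensional.continuousOn hpos
  refine ⟨c, hc, fun x => ?_⟩
  rcases eq_or_ne x 0 with rfl | hx
  · simp
  have hx' : 0 < ‖x‖ := norm_pos_iff.mpr hx
  have hu : ‖x‖⁻¹ • x ∈ Metric.sphere (0 : E) 1 := by
    simp [norm_smul, hx'.ne']
  calc c * ‖x‖ ≤ p (‖x‖⁻¹ • x) * ‖x‖ := by gcongr; exact hcp _ hu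
    _ = p x := by rw [map_smul_eq_mul, norm_inv, norm_norm]; field_simp

theorem tendsto_cocompact_atTop (p : Seminorm ℝ E) (hp : ∀ x, p x = 0 → x = 0) :
    Tendsto p (cocompact E) atTop := by
  obtain ⟨c, hc, hcp⟩ := p.exists_pos_mul_norm_le hp
  exact tendsto_atTop_mono hcp (tendsto_norm_cocompact_atTop.const_mul_atTop hc)

end Seminorm

section KLIEP

variable {k n : ℕ} (tbar : EuclideanSpace ℝ (Fin k)) (t : Fin n → EuclideanSpace ℝ (Fin k))

theorem continuous_kliepLoss : Continuous (kliepLoss tbar t) := by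
  have hinner : Continuous fun Δ : EuclideanSpace ℝ (Fin k) => ⟪Δ, tbar⟫ :=
    continuous_id.inner continuous_const
  rcases Nat.eq_zero_or_pos n with rfl | hn
  · -- for `n = 0` the sum is empty and `Real.log 0 = 0`
    convert hinner.neg using 1
    funext Δ
    simp [kliepLoss]
  refine hinner.neg.add (Continuous.log (by fun_prop) fun Δ => ?_)
  have : Nonempty (Fin n) := ⟨⟨0, hn⟩⟩
  positivity

theorem neg_log_le_kliepLoss (hmem : tbar ∈ convexHull ℝ (Set.range t))
    (Δ : EuclideanSpace ℝ (Fin k)) : -Real.log n ≤ kliepLoss tbar t Δ := by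
  obtain ⟨_, ⟨j, rfl⟩, hj⟩ :=
    ((innerₛₗ ℝ Δ).convexOn convex_univ).exists_ge_of_mem_convexHull (Set.subset_univ _) hmem
  have hn : (0 : ℝ) < n := Nat.cast_pos.mpr j.pos
  have hsum : Real.exp ⟪Δ, t j⟫ ≤ ∑ i, Real.exp ⟪Δ, t i⟫ :=
    Finset.single_le_sum (f := fun i => Real.exp ⟪Δ, t i⟫) (fun i _ => (Real.exp_pos _).le)
      (Finset.mem_univ j)
  calc -Real.log n ≤ -⟪Δ, tbar⟫ + Real.log ((1 / (n : ℝ)) * Real.exp ⟪Δ, t j⟫) := by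
        rw [Real.log_mul (by positivity) (Real.exp_pos _).ne', Real.log_exp, one_div,
          Real.log_inv]
        simp only [innerₛₗ_apply_apply] at hj
        linarith
    _ ≤ kliepLoss tbar t Δ := by
        unfold kliepLoss
        gcongr

end KLIEP

theorem penalized_kliep_attains_min_of_relbd_general {k n : ℕ}
    (tbar : EuclideanSpace ℝ (Fin k)) (t : Fin n → EuclideanSpace ℝ (Fin k))
    (N : EuclideanSpace ℝ (Fin k) → ℝ)
    (hN_add : ∀ x y, N (x + y) ≤ N x + N y)
    (hN_smul : ∀ (c : ℝ) (x), N (c • x) = |c| * N x)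
    (hN_zero : ∀ x, N x = 0 ↔ x = 0)
    (hmem : tbar ∈ convexHull ℝ (Set.range t) \ intrinsicInterior ℝ (convexHull ℝ (Set.range t))) :
    ∀ lam : ℝ, 0 < lam →
      ∃ Δ₀ : EuclideanSpace ℝ (Fin k), ∀ Δ : EuclideanSpace ℝ (Fin k),
        kliepLoss tbar t Δ₀ + lam * N Δ₀ ≤ kliepLoss tbar t Δ + lam * N Δ := by
  intro lam hlam
  let p : Seminorm ℝ (EuclideanSpace ℝ (Fin k)) :=
    Seminorm.of N hN_add fun c x => by rw [Real.norm_eq_abs, hN_smul]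
  have hcont : Continuous fun Δ => kliepLoss tbar t Δ + lam * p Δ :=
    (continuous_kliepLoss tbar t).add (continuous_const.mul p.continuous_of_finiteDimensional)
  have hcoercive : Tendsto (fun Δ => kliepLoss tbar t Δ + lam * p Δ) (cocompact _) atTop :=
    tendsto_atTop_mono (fun Δ => add_le_add_left (neg_log_le_kliepLoss tbar t hmem.1 Δ) _)
      (tendsto_atTop_add_const_left _ _
        ((p.tendsto_cocompact_atTop fun x => (hN_zero x).mp).const_mul_atTop hlam))
  exact hcont.exists_forall_le hcoercive

/-- Theorem 2(ii), `λ > 0` case: if `t̄ ∈ relbd(C)` (i.e. `t̄ ∈ C \ relint(C)`), then for every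
`λ > 0` the norm-penalized KLIEP loss `ℓ(Δ) + λ·N(Δ)` attains a global minimum. -/
theorem penalized_kliep_attains_min_of_relbd {k n : ℕ} (hk : 1 ≤ k) (hn : 1 ≤ n)
    (tbar : EuclideanSpace ℝ (Fin k)) (t : Fin n → EuclideanSpace ℝ (Fin k))
    (N : EuclideanSpace ℝ (Fin k) → ℝ)
    (hN_add : ∀ x y, N (x + y) ≤ N x + N y)
    (hN_smul : ∀ (c : ℝ) (x), N (c • x) = |c| * N x)
    (hN_zero : ∀ x, N x = 0 ↔ x = 0)
    (hmem : tbar ∈ convexHull ℝ (Set.range t) \ intrinsicInterior ℝ (convexHull ℝ (Set.range t))) :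
    ∀ lam : ℝ, 0 < lam →
      ∃ Δ₀ : EuclideanSpace ℝ (Fin k), ∀ Δ : EuclideanSpace ℝ (Fin k),
        kliepLoss tbar t Δ₀ + lam * N Δ₀ ≤ kliepLoss tbar t Δ + lam * N Δ :=
  penalized_kliep_attains_min_of_relbd_general tbar t N hN_add hN_smul hN_zero hmem
end

section
/- For every Δ ∈ ℝ^k the empirical KLIEP loss satisfies the lower bound ℓ(Δ) ≥ −λ#·N(Δ) − log(n), where λ# = min_{t ∈ C} N#(t̄ − t). Consequently, for every λ ≥ 0, the penalized loss satisfies ℓ(Δ) + λ·N(Δ) ≥ (λ − λ#)·N(Δ) − log(n) for all Δ ∈ ℝ^k. -/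
/-!
For `s` in the convex hull of the `t j`, `⟪Δ, s⟫ ≤ max_j ⟪Δ, t j⟫ ≤ log ∑_j exp ⟪Δ, t j⟫`, so
`ℓ(Δ) ≥ -⟪Δ, t̄ - s⟫ - log n ≥ -N(Δ) N#(t̄ - s) - log n` by the generalized Cauchy–Schwarz
inequality; choosing `s` a minimiser of `N#(t̄ - ·)` gives the bound. The supremum defining
`N#` is a genuine (finite) supremum because, in finite dimension, the definite seminorm `N`
dominates a multiple of the Euclidean norm: `N` is convex, hence continuous, and so attains
a positive minimum on the unit sphere.
-/

open scoped RealInnerProductSpace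

/-- The dual norm `N#(v) = sup { ⟪Δ, v⟫ : N(Δ) ≤ 1 }` of a norm `N` on `ℝ^k`. -/
noncomputable def dualNorm {k : ℕ} (N : EuclideanSpace ℝ (Fin k) → ℝ)
    (v : EuclideanSpace ℝ (Fin k)) : ℝ :=
  sSup ((fun Δ : EuclideanSpace ℝ (Fin k) => ⟪Δ, v⟫) '' {Δ | N Δ ≤ 1})

theorem Seminorm.exists_pos_mul_norm_le_s15 {E : Type*} [NormedAddCommGroup E] [NormedSpace ℝ E]
    [FiniteDimensional ℝ E] (p : Seminorm ℝ E) (hp : ∀ x, p x = 0 → x = 0) :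
    ∃ c > 0, ∀ x, c * ‖x‖ ≤ p x := by
  rcases subsingleton_or_nontrivial E with _ | _
  · exact ⟨1, one_pos, fun x => by simp [Subsingleton.elim x 0]⟩
  have : ProperSpace E := FiniteDimensional.proper ℝ E
  obtain ⟨x₀, hx₀, hmin⟩ := (isCompact_sphere (0 : E) 1).exists_isMinOn
    (NormedSpace.sphere_nonempty.2 zero_le_one) p.convexOn.locallyLipschitz.continuous.continuousOn
  have hx₀ : ‖x₀‖ = 1 := by simpa using hx₀
  refine ⟨p x₀, (apply_nonneg p x₀).lt_of_ne fun h => ?_, fun x => ?_⟩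
  · simp [hp x₀ h.symm] at hx₀
  rcases eq_or_ne x 0 with rfl | hx
  · simp
  have hx' : 0 < ‖x‖ := norm_pos_iff.2 hx
  have hmem : ‖x‖⁻¹ • x ∈ Metric.sphere (0 : E) 1 := by
    simp [norm_smul, hx'.ne']
  have := hmin hmem
  simp only [Set.mem_ofPred_eq, map_smul_eq_mul, norm_inv, norm_norm] at this
  rwa [le_inv_mul_iff₀ hx', mul_comm] at this

theorem inner_le_mul_dualNorm {k : ℕ} (p : Seminorm ℝ (EuclideanSpace ℝ (Fin k)))
    (hp : ∀ x, p x = 0 → x = 0) (x v : EuclideanSpace ℝ (Fin k)) :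
    ⟪x, v⟫ ≤ p x * dualNorm p v := by
  obtain ⟨c, hc, hpc⟩ := p.exists_pos_mul_norm_le_s15 hp
  have hbdd : BddAbove ((fun Δ : EuclideanSpace ℝ (Fin k) => ⟪Δ, v⟫) '' {Δ | p Δ ≤ 1}) := by
    refine ⟨1 / c * ‖v‖, ?_⟩
    rintro _ ⟨Δ, hΔ, rfl⟩
    have hΔ : ‖Δ‖ ≤ 1 / c := (le_div_iff₀' hc).2 ((hpc Δ).trans hΔ)
    exact (real_inner_le_norm Δ v).trans (by gcongr)
  rcases (apply_nonneg p x).eq_or_lt with hx | hx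
  · simp [hp x hx.symm]
  have hunit : p ((p x)⁻¹ • x) ≤ 1 := by
    rw [map_smul_eq_mul, norm_inv, Real.norm_of_nonneg hx.le, inv_mul_cancel₀ hx.ne']
  have : ⟪(p x)⁻¹ • x, v⟫ ≤ dualNorm p v := le_csSup hbdd ⟨_, hunit, rfl⟩
  rwa [real_inner_smul_left, inv_mul_le_iff₀ hx] at this

theorem inner_le_log_sum_exp_of_mem_convexHull {E ι : Type*} [NormedAddCommGroup E]
    [InnerProductSpace ℝ E] [Fintype ι] {t : ι → E} {s : E}
    (hs : s ∈ convexHull ℝ (Set.range t)) (Δ : E) :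
    ⟪Δ, s⟫ ≤ Real.log (∑ j, Real.exp ⟪Δ, t j⟫) := by
  have hpos : 0 < ∑ j, Real.exp ⟪Δ, t j⟫ := by
    obtain ⟨j⟩ : Nonempty ι :=
      Set.range_nonempty_iff_nonempty.1 (convexHull_nonempty_iff.1 ⟨s, hs⟩)
    exact Finset.sum_pos (fun j _ => Real.exp_pos _) ⟨j, Finset.mem_univ j⟩
  refine convexHull_min ?_ (convex_halfSpace_le (innerₛₗ ℝ Δ).isLinear _) hs
  rintro _ ⟨j, rfl⟩
  exact (Real.le_log_iff_exp_le hpos).2 <| Finset.single_le_sum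
    (f := fun j => Real.exp ⟪Δ, t j⟫) (fun i _ => (Real.exp_pos _).le) (Finset.mem_univ j)

theorem neg_inner_sub_sub_log_le_kliepLoss {k n : ℕ} (tbar : EuclideanSpace ℝ (Fin k))
    {t : Fin n → EuclideanSpace ℝ (Fin k)} {s : EuclideanSpace ℝ (Fin k)}
    (hs : s ∈ convexHull ℝ (Set.range t)) (Δ : EuclideanSpace ℝ (Fin k)) :
    -⟪Δ, tbar - s⟫ - Real.log n ≤ kliepLoss tbar t Δ := by
  have : Nonempty (Fin n) :=
    Set.range_nonempty_iff_nonempty.1 (convexHull_nonempty_iff.1 ⟨s, hs⟩)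
  have hn : (0 : ℝ) < n := Nat.cast_pos.2 (Fin.pos_iff_nonempty.2 this)
  have hsum : 0 < ∑ j, Real.exp ⟪Δ, t j⟫ :=
    Finset.sum_pos (fun j _ => Real.exp_pos _) Finset.univ_nonempty
  rw [kliepLoss, Real.log_mul (by positivity) hsum.ne', one_div, Real.log_inv, inner_sub_right]
  linarith [inner_le_log_sum_exp_of_mem_convexHull hs Δ]

theorem kliep_dual_dist_lower_bound_general {k n : ℕ}
    (tbar : EuclideanSpace ℝ (Fin k)) (t : Fin n → EuclideanSpace ℝ (Fin k))
    (N : EuclideanSpace ℝ (Fin k) → ℝ)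
    (hN_add : ∀ x y, N (x + y) ≤ N x + N y)
    (hN_smul : ∀ (c : ℝ) (x), N (c • x) = |c| * N x)
    (hN_zero : ∀ x, N x = 0 ↔ x = 0)
    (lam : ℝ)
    (hlam : IsLeast ((fun s => dualNorm N (tbar - s)) '' convexHull ℝ (Set.range t)) lam) :
    (∀ Δ : EuclideanSpace ℝ (Fin k),
        -lam * N Δ - Real.log n ≤ kliepLoss tbar t Δ) ∧
      ∀ lam' : ℝ, 0 ≤ lam' → ∀ Δ : EuclideanSpace ℝ (Fin k),
        (lam' - lam) * N Δ - Real.log n ≤ kliepLoss tbar t Δ + lam' * N Δ := by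
  let p : Seminorm ℝ (EuclideanSpace ℝ (Fin k)) := .of N hN_add hN_smul
  obtain ⟨⟨s, hs, rfl⟩, -⟩ := hlam
  have hbound (Δ) : -dualNorm N (tbar - s) * N Δ - Real.log n ≤ kliepLoss tbar t Δ := by
    have : ⟪Δ, tbar - s⟫ ≤ N Δ * dualNorm N (tbar - s) :=
      inner_le_mul_dualNorm p (fun x => (hN_zero x).1) Δ (tbar - s)
    linarith [neg_inner_sub_sub_log_le_kliepLoss tbar hs Δ]
  refine ⟨hbound, fun lam' _ Δ => ?_⟩
  linarith [hbound Δ]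

/-- For every `Δ`, `ℓ(Δ) ≥ -λ#·N(Δ) - log n` where `λ# = min_{t ∈ C} N#(t̄ - t)`;
consequently `ℓ(Δ) + λ·N(Δ) ≥ (λ - λ#)·N(Δ) - log n` for every `λ ≥ 0`. -/
theorem kliep_dual_dist_lower_bound {k n : ℕ} (hk : 1 ≤ k) (hn : 1 ≤ n)
    (tbar : EuclideanSpace ℝ (Fin k)) (t : Fin n → EuclideanSpace ℝ (Fin k))
    (N : EuclideanSpace ℝ (Fin k) → ℝ)
    (hN_add : ∀ x y, N (x + y) ≤ N x + N y)
    (hN_smul : ∀ (c : ℝ) (x), N (c • x) = |c| * N x)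
    (hN_zero : ∀ x, N x = 0 ↔ x = 0)
    (lam : ℝ)
    (hlam : IsLeast ((fun s => dualNorm N (tbar - s)) '' convexHull ℝ (Set.range t)) lam) :
    (∀ Δ : EuclideanSpace ℝ (Fin k),
        -lam * N Δ - Real.log n ≤ kliepLoss tbar t Δ) ∧
      ∀ lam' : ℝ, 0 ≤ lam' → ∀ Δ : EuclideanSpace ℝ (Fin k),
        (lam' - lam) * N Δ - Real.log n ≤ kliepLoss tbar t Δ + lam' * N Δ :=
  kliep_dual_dist_lower_bound_general tbar t N hN_add hN_smul hN_zero lam hlam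
end
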